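/- Let X be an n×n symmetric matrix whose sparsity pattern forms a chordal graph, and let {Z_1,...,Z_p} be clique matrices for the maximal cliques with selection matrices P_i. Then X is positive semidefinite if and only if X can be written as X = Σ_{i=1}^p P_iᵀ Z_i P_i with every Z_i positive semidefinite. -/

import Mathlib

open Finset Matrix

/-- A simple graph is chordal if every cycle of length greater than 3 has a chord:
two vertices of the cycle that are adjacent in the graph via an edge not in the cycle. -/
def SimpleGraph.IsChordal {V : Type*} (G : SimpleGraph V) : Prop :=
  ∀ ⦃v : V⦄ (w : G.Walk v v), w.IsCycle → 3 < w.length →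
    ∃ u₁ u₂, u₁ ∈ w.support ∧ u₂ ∈ w.support ∧ G.Adj u₁ u₂ ∧ s(u₁, u₂) ∉ w.edges

/-- The selection matrix `P_s` of an index subset `s ⊆ Fin n`. -/
def selMat {n : ℕ} (s : Finset (Fin n)) : Matrix s (Fin n) ℝ :=
  Matrix.of fun a k => if (a : Fin n) = k then 1 else 0

/-!
Every nonempty vertex set `s` of a chordal graph contains a vertex that is simplicial in `s`
(Dirac). Given `X` positive semidefinite with sparsity pattern in `G`, take such a vertex `v`
among the indices of the nonzero rows of `X`. One step of symmetric Gaussian elimination at `v`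
writes `X` as the rank-one positive semidefinite matrix `X[:,v] X[v,:] / X[v,v]` plus the Schur
complement. The rank-one part is supported on the clique `{v} ∪ N(v)`, hence on a maximal clique.
The Schur complement is positive semidefinite, vanishes in row `v`, and keeps its pattern in `G`
because its fill-in only joins neighbours of `v`. Induction on the set of nonzero rows finishes.
-/

namespace SimpleGraph

variable {V : Type*} {G : SimpleGraph V}

namespace Walk

/-- A chord between positions `i + 1 < j` of `p` would give a shorter walk inside `T`. -/
theorem isChordless_of_forall_length_le {T : Set V} {x y : V} {p : G.Walk x y}
    (hp : ∀ v ∈ p.support, v ∈ T)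
    (hmin : ∀ q : G.Walk x y, (∀ v ∈ q.support, v ∈ T) → p.length ≤ q.length) :
    p.IsChordless := by
  classical
  have length_split : ∀ u (h : u ∈ p.support),
      (p.takeUntil u h).length + (p.dropUntil u h).length = p.length := fun u h => by
    rw [← length_append, take_spec]
  have shortcut : ∀ u₁ u₂ (h₁ : u₁ ∈ p.support) (h₂ : u₂ ∈ p.support), G.Adj u₁ u₂ →
      (p.takeUntil u₂ h₂).length ≤ (p.takeUntil u₁ h₁).length + 1 := by
    intro u₁ u₂ h₁ h₂ hadj
    have hle := hmin ((p.takeUntil u₁ h₁).append (cons hadj (p.dropUntil u₂ h₂))) fun v hv => by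
      rcases (mem_support_append_iff _ _).1 hv with hv | hv
      · exact hp v (support_takeUntil_subset_support _ _ hv)
      · rw [support_cons, List.mem_cons] at hv
        rcases hv with rfl | hv
        · exact hp v h₁
        · exact hp v (support_dropUntil_subset_support _ _ hv)
    rw [length_append, length_cons] at hle
    have := length_split u₂ h₂
    omega
  rw [isChordless_iff_forall_mem_edges]
  intro u₁ u₂ h₁ h₂ hadj
  have h₁₂ := shortcut u₁ u₂ h₁ h₂ hadj
  have h₂₁ := shortcut u₂ u₁ h₂ h₁ hadj.symm
  have hne : (p.takeUntil u₁ h₁).length ≠ (p.takeUntil u₂ h₂).length := fun h =>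
    hadj.ne (by rw [← p.getVert_length_takeUntil h₁, h, p.getVert_length_takeUntil h₂])
  have hlen₁ := length_split u₁ h₁
  have hlen₂ := length_split u₂ h₂
  rw [mk_mem_edges_iff_exists]
  rcases Nat.lt_or_gt_of_ne hne with h | h
  · refine ⟨(p.takeUntil u₁ h₁).length, by omega, ?_⟩
    rw [p.getVert_length_takeUntil h₁, show (p.takeUntil u₁ h₁).length + 1 =
      (p.takeUntil u₂ h₂).length by omega, p.getVert_length_takeUntil h₂]
  · refine ⟨(p.takeUntil u₂ h₂).length, by omega, ?_⟩
    rw [p.getVert_length_takeUntil h₂, show (p.takeUntil u₂ h₂).length + 1 =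
      (p.takeUntil u₁ h₁).length by omega, p.getVert_length_takeUntil h₁, Sym2.eq_swap]

theorem exists_isPath_forall_length_le {T : Set V} {x y : V} (w : G.Walk x y)
    (hw : ∀ v ∈ w.support, v ∈ T) :
    ∃ p : G.Walk x y, p.IsPath ∧ (∀ v ∈ p.support, v ∈ T) ∧
      ∀ q : G.Walk x y, (∀ v ∈ q.support, v ∈ T) → p.length ≤ q.length := by
  classical
  have hex : ∃ l, ∃ q : G.Walk x y, (∀ v ∈ q.support, v ∈ T) ∧ q.length = l :=
    ⟨_, w, hw, rfl⟩
  obtain ⟨q, hq, hlen⟩ := Nat.find_spec hex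
  exact ⟨q.bypass, q.bypass_isPath, fun v hv => hq v (q.support_bypass_subset_support hv),
    fun r hr => q.length_bypass_le_length.trans (hlen ▸ Nat.find_min' hex ⟨r, hr, rfl⟩)⟩

theorem two_le_length_of_not_adj {x y : V} (p : G.Walk x y) (hxy : x ≠ y)
    (hadj : ¬G.Adj x y) : 2 ≤ p.length := by
  by_contra! h
  interval_cases hl : p.length
  · exact hxy (eq_of_length_eq_zero hl)
  · exact hadj (adj_of_length_eq_one hl)

theorem IsPath.start_notMem_support_tail {x y : V} {p : G.Walk x y} (hp : p.IsPath) :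
    x ∉ p.support.tail :=
  (List.nodup_cons.1 (p.cons_tail_support ▸ hp.support_nodup)).1

end Walk

open Walk in
/-- Shortest such walks `p` and `q` are chordless paths meeting only at `x` and `y`, so if
`x` and `y` were not adjacent, `p` followed by `q` reversed would be a chordless cycle of
length at least `4`. -/
theorem IsChordal.adj_of_walks_through_separated (hG : G.IsChordal) {A B : Set V}
    (hAB : ∀ a ∈ A, ∀ b ∈ B, a ≠ b ∧ ¬G.Adj a b) {x y : V} (hxy : x ≠ y)
    (p : G.Walk x y) (hp : ∀ v ∈ p.support, v ∈ insert x (insert y A))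
    (q : G.Walk x y) (hq : ∀ v ∈ q.support, v ∈ insert x (insert y B)) : G.Adj x y := by
  by_contra hnadj
  obtain ⟨p, hpath, hp, hpmin⟩ := p.exists_isPath_forall_length_le hp
  obtain ⟨q, hqpath, hq, hqmin⟩ := q.exists_isPath_forall_length_le hq
  have hpc := isChordless_of_forall_length_le hp hpmin
  have hqc := isChordless_of_forall_length_le hq hqmin
  have hdisj : p.support.tail.Disjoint q.reverse.support.tail := by
    intro v hvp hvq
    have hvx : v ≠ x := fun h => hpath.start_notMem_support_tail (h ▸ hvp)
    have hvy : v ≠ y := fun h => hqpath.reverse.start_notMem_support_tail (h ▸ hvq)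
    have hvA := hp v (List.mem_of_mem_tail hvp)
    have hvB := hq v (by simpa using List.mem_of_mem_tail hvq)
    simp only [Set.mem_insert_iff, hvx, hvy, false_or] at hvA hvB
    exact (hAB v hvA v hvB).1 rfl
  have hp₂ := p.two_le_length_of_not_adj hxy hnadj
  have hq₂ := q.two_le_length_of_not_adj hxy hnadj
  obtain ⟨u₁, u₂, h₁, h₂, hadj, hchord⟩ :=
    hG (p.append q.reverse) (hpath.isCycle_append hqpath.reverse hdisj (by omega))
      (by simp only [length_append, length_reverse]; omega)
  simp only [mem_support_append_iff, support_reverse, List.mem_reverse, edges_append,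
    edges_reverse, List.mem_append, not_or] at h₁ h₂ hchord
  have hpA : ∀ u ∈ p.support, u ∉ q.support → u ∈ A := fun u hu huq => by
    rcases hp u hu with rfl | rfl | h
    exacts [absurd q.start_mem_support huq, absurd q.end_mem_support huq, h]
  have hqB : ∀ u ∈ q.support, u ∉ p.support → u ∈ B := fun u hu hup => by
    rcases hq u hu with rfl | rfl | h
    exacts [absurd p.start_mem_support hup, absurd p.end_mem_support hup, h]
  by_cases hp₁ : u₁ ∈ p.support <;> by_cases hp₂ : u₂ ∈ p.support <;>
    by_cases hq₁ : u₁ ∈ q.support <;> by_cases hq₂ : u₂ ∈ q.support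
  all_goals first
    | exact hchord.1 (hpc.mem_edges hp₁ hp₂ hadj)
    | exact hchord.2 (hqc.mem_edges hq₁ hq₂ hadj)
    | exact (hAB u₁ (hpA u₁ hp₁ hq₁) u₂ (hqB u₂ hq₂ hp₂)).2 hadj
    | exact (hAB u₂ (hpA u₂ hp₂ hq₂) u₁ (hqB u₁ hq₁ hp₁)).2 hadj.symm
    | tauto

def ReachableWithin (G : SimpleGraph V) (D : Set V) (a b : V) : Prop :=
  ∃ w : G.Walk a b, ∀ v ∈ w.support, v ∈ D

namespace ReachableWithin

variable {D : Set V} {a b c : V}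

theorem refl (ha : a ∈ D) : G.ReachableWithin D a a :=
  ⟨.nil, by simpa using ha⟩

theorem mem_right : G.ReachableWithin D a b → b ∈ D
  | ⟨w, hw⟩ => hw b w.end_mem_support

theorem symm : G.ReachableWithin D a b → G.ReachableWithin D b a
  | ⟨w, hw⟩ => ⟨w.reverse, fun v hv => hw v (by simpa using hv)⟩

theorem trans : G.ReachableWithin D a b → G.ReachableWithin D b c → G.ReachableWithin D a c
  | ⟨w, hw⟩, ⟨w', hw'⟩ => ⟨w.append w', fun v hv =>
    ((Walk.mem_support_append_iff _ _).1 hv).elim (hw v) (hw' v)⟩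

theorem concat (h : G.ReachableWithin D a b) (hbc : G.Adj b c) (hc : c ∈ D) :
    G.ReachableWithin D a c :=
  h.trans <| show ∃ w : G.Walk b c, _ from ⟨hbc.toWalk, by simp [h.mem_right, hc]⟩

end ReachableWithin

def IsSimplicialIn (G : SimpleGraph V) (s : Set V) (v : V) : Prop :=
  v ∈ s ∧ G.IsClique (s ∩ G.neighborSet v)

namespace IsSimplicialIn

variable {s t : Set V} {v : V}

theorem of_isClique (hs : G.IsClique s) (hv : v ∈ s) : G.IsSimplicialIn s v :=
  ⟨hv, hs.subset Set.inter_subset_left⟩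

theorem of_subset (hv : G.IsSimplicialIn t v) (hts : t ⊆ s) (hnbr : s ∩ G.neighborSet v ⊆ t) :
    G.IsSimplicialIn s v :=
  ⟨hts hv.1, hv.2.subset (Set.subset_inter hnbr Set.inter_subset_right)⟩

theorem isClique_insert (hv : G.IsSimplicialIn s v) :
    G.IsClique (insert v (s ∩ G.neighborSet v)) :=
  hv.2.insert fun _ hu _ => hu.2

end IsSimplicialIn

open Walk in
/-- Let `C` be the component of `b` in `s` minus the closed neighbourhood of `a`, and `S` the set
of neighbours of `a` adjacent to `C`. Then `S` is a clique, and a simplicial vertex of `C ∪ S ⊂ s`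
lying in `C` is simplicial in `s`. -/
theorem IsChordal.exists_isSimplicialIn_not_adj_of_forall_ssubset (hG : G.IsChordal)
    {s : Finset V}
    (ih : ∀ t ⊂ s, ¬G.IsClique (t : Set V) →
      ∃ u w, G.IsSimplicialIn t u ∧ G.IsSimplicialIn t w ∧ u ≠ w ∧ ¬G.Adj u w)
    {a b : V} (ha : a ∈ s) (hb : b ∈ s) (hab : a ≠ b) (hnadj : ¬G.Adj a b) :
    ∃ v, G.IsSimplicialIn s v ∧ v ≠ a ∧ ¬G.Adj a v := by
  classical
  set D : Set V := {u | u ∈ s ∧ u ≠ a ∧ ¬G.Adj a u}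
  set C := s.filter (G.ReachableWithin D b)
  set S := s.filter fun u => G.Adj a u ∧ ∃ c ∈ C, G.Adj u c
  have hCD : ∀ c ∈ C, c ∈ D := fun c hc => (Finset.mem_filter.1 hc).2.mem_right
  have hbC : b ∈ C := Finset.mem_filter.2 ⟨hb, .refl ⟨hb, hab.symm, hnadj⟩⟩
  have hnbr : ∀ c ∈ C, ∀ u ∈ s, G.Adj c u → u ∈ C ∪ S := by
    intro c hc u hu hcu
    obtain ⟨-, -, hac⟩ := hCD c hc
    by_cases hau : G.Adj a u
    · exact Finset.mem_union_right _ (Finset.mem_filter.2 ⟨hu, hau, c, hc, hcu.symm⟩)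
    · refine Finset.mem_union_left _ (Finset.mem_filter.2 ⟨hu, ?_⟩)
      have hua : u ≠ a := by rintro rfl; exact hac hcu.symm
      exact (Finset.mem_filter.1 hc).2.concat hcu ⟨hu, hua, hau⟩
  have hS : G.IsClique (S : Set V) := by
    intro x hx y hy hxy
    simp only [Finset.coe_filter, Set.mem_ofPred_eq, S] at hx hy
    obtain ⟨-, hax, cx, hcx, hxcx⟩ := hx
    obtain ⟨-, hay, cy, hcy, hycy⟩ := hy
    obtain ⟨w, hw⟩ := (Finset.mem_filter.1 hcx).2.symm.trans (Finset.mem_filter.1 hcy).2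
    refine hG.adj_of_walks_through_separated (A := {a}) (B := D)
      (fun _ ha' d hd => ha' ▸ ⟨fun h => hd.2.1 h.symm, hd.2.2⟩) hxy
      (cons hax.symm (cons hay nil)) (by simp) (cons hxcx (w.concat hycy.symm)) ?_
    intro v hv
    simp only [support_cons, support_concat, List.mem_cons, List.mem_append, List.mem_nil_iff,
      or_false] at hv
    rcases hv with rfl | hv | rfl
    exacts [Set.mem_insert _ _, Set.mem_insert_of_mem _ (Set.mem_insert_of_mem _ (hw v hv)),
      Set.mem_insert_of_mem _ (Set.mem_insert _ _)]
  have hsub : C ∪ S ⊂ s := by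
    refine Finset.ssubset_iff_of_subset (Finset.union_subset (Finset.filter_subset _ _)
      (Finset.filter_subset _ _)) |>.2 ⟨a, ha, ?_⟩
    rw [Finset.mem_union, not_or]
    exact ⟨fun h => (hCD a h).2.1 rfl, fun h => G.irrefl (Finset.mem_filter.1 h).2.1⟩
  obtain ⟨v, hvC, hv⟩ : ∃ v ∈ C, G.IsSimplicialIn (C ∪ S : Finset V) v := by
    by_cases hcl : G.IsClique ((C ∪ S : Finset V) : Set V)
    · exact ⟨b, hbC, .of_isClique hcl (by simp [hbC])⟩
    obtain ⟨u, w, hu, hw, huw, hnadj⟩ := ih _ hsub hcl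
    rcases Finset.mem_union.1 hu.1 with hu' | hu'
    · exact ⟨u, hu', hu⟩
    rcases Finset.mem_union.1 hw.1 with hw' | hw'
    · exact ⟨w, hw', hw⟩
    exact absurd (hS hu' hw' huw) hnadj
  refine ⟨v, hv.of_subset (Finset.coe_subset.2 hsub.subset) fun u hu => ?_, (hCD v hvC).2.1,
    (hCD v hvC).2.2⟩
  exact hnbr v hvC u hu.1 hu.2

theorem IsChordal.exists_two_isSimplicialIn_of_not_isClique (hG : G.IsChordal) (s : Finset V)
    (hs : ¬G.IsClique (s : Set V)) :
    ∃ u w, G.IsSimplicialIn s u ∧ G.IsSimplicialIn s w ∧ u ≠ w ∧ ¬G.Adj u w := by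
  induction s using Finset.strongInduction with
  | H s ih =>
    obtain ⟨a, ha, b, hb, hab, hnadj⟩ : ∃ a ∈ s, ∃ b ∈ s, a ≠ b ∧ ¬G.Adj a b := by
      simpa [IsClique, Set.Pairwise] using hs
    obtain ⟨u, hu, hua, hau⟩ :=
      hG.exists_isSimplicialIn_not_adj_of_forall_ssubset ih ha hb hab hnadj
    obtain ⟨w, hw, hwu, huw⟩ :=
      hG.exists_isSimplicialIn_not_adj_of_forall_ssubset ih hu.1 ha hua fun h => hau h.symm
    exact ⟨u, w, hu, hw, hwu.symm, huw⟩

theorem IsChordal.exists_isSimplicialIn (hG : G.IsChordal) {s : Finset V} (hs : s.Nonempty) :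
    ∃ v, G.IsSimplicialIn s v := by
  by_cases hcl : G.IsClique (s : Set V)
  · obtain ⟨v, hv⟩ := hs
    exact ⟨v, .of_isClique hcl hv⟩
  · obtain ⟨u, -, hu, -⟩ := hG.exists_two_isSimplicialIn_of_not_isClique s hcl
    exact ⟨u, hu⟩

theorem exists_subset_of_isClique {ι : Type*} [Finite V] {cliques : ι → Finset V}
    (hmax : ∀ s : Finset V, G.IsClique (s : Set V) ∧
      (∀ t : Finset V, G.IsClique (t : Set V) → s ⊆ t → s = t) → ∃ i, cliques i = s)
    {K : Set V} (hK : G.IsClique K) : ∃ i, K ⊆ cliques i := by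
  classical
  have := Fintype.ofFinite V
  obtain ⟨M, hKM, hM, hMmax⟩ := Finite.exists_le_maximal (p := fun M : Finset V => G.IsClique M)
    (a := K.toFinset) (by simpa using hK)
  obtain ⟨i, rfl⟩ := hmax M ⟨hM, fun t ht hMt => le_antisymm hMt (hMmax ht hMt)⟩
  exact ⟨i, fun x hx => hKM (by simpa using hx)⟩

end SimpleGraph

namespace Matrix

variable {m : Type*} {X : Matrix m m ℝ}

/-- `X[:, v] X[v, :] / X[v, v]`, which is `0` when `X v v = 0`. -/
noncomputable def pivotRankOne (X : Matrix m m ℝ) (v : m) : Matrix m m ℝ :=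
  (X v v)⁻¹ • vecMulVec (X v) (X v)

theorem pivotRankOne_apply (v i j : m) : X.pivotRankOne v i j = (X v v)⁻¹ * (X v i * X v j) :=
  rfl

variable [Fintype m]

theorem PosSemidef.row_eq_zero_of_diag_eq_zero (hX : X.PosSemidef) {v : m} (h : X v v = 0) :
    X v = 0 := by
  classical
  have hcol := (hX.dotProduct_mulVec_zero_iff (Pi.single v 1)).1 (by simp [mulVec_single, h])
  ext j
  rw [← isHermitian_iff_isSymm.1 hX.1 |>.apply v j]
  simpa [mulVec_single] using congrFun hcol j

theorem PosSemidef.pivotRankOne (hX : X.PosSemidef) (v : m) : (X.pivotRankOne v).PosSemidef := by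
  simpa [Matrix.pivotRankOne] using
    (posSemidef_vecMulVec_self_star (X v)).smul (inv_nonneg.2 (hX.diag_nonneg (i := v)))

/-- Cauchy–Schwarz for the form `x ↦ xᵀ X x`, applied to `x` and the unit vector at `v`. -/
theorem PosSemidef.sub_pivotRankOne (hX : X.PosSemidef) (v : m) :
    (X - X.pivotRankOne v).PosSemidef := by
  classical
  refine .of_dotProduct_mulVec_nonneg (hX.1.sub (hX.pivotRankOne v).1) fun x => ?_
  have hcs := X.toBilin'.apply_mul_apply_le_of_forall_zero_le
    (fun y => by simpa [toBilin'_apply'] using hX.dotProduct_mulVec_nonneg y) (Pi.single v 1) x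
  have hcol : X.col v = X v := funext fun j => (isHermitian_iff_isSymm.1 hX.1).apply v j
  simp only [toBilin'_apply', single_dotProduct, one_mul, mulVec_single, op_smul_eq_smul,
    one_smul, hcol] at hcs
  rw [show (X *ᵥ x) v = X v ⬝ᵥ x from rfl, dotProduct_comm x (X v)] at hcs
  rw [star_trivial, sub_mulVec, dotProduct_sub, Matrix.pivotRankOne, smul_mulVec,
    vecMulVec_mulVec, op_smul_eq_smul, dotProduct_smul, dotProduct_smul, smul_eq_mul, smul_eq_mul,
    dotProduct_comm x (X v)]
  rcases (hX.diag_nonneg (i := v)).eq_or_lt with h | h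
  · simpa [← h] using hX.dotProduct_mulVec_nonneg x
  · rwa [sub_nonneg, inv_mul_le_iff₀ h]

theorem PosSemidef.sub_pivotRankOne_row_self (hX : X.PosSemidef) (v : m) :
    (X - X.pivotRankOne v) v = 0 := by
  ext j
  rw [sub_apply, pivotRankOne_apply]
  by_cases h : X v v = 0
  · simp [hX.row_eq_zero_of_diag_eq_zero h]
  · simp [h]

end Matrix

section CliqueDecomposition

variable {n p : ℕ}

theorem vecMul_selMat_of_support_subset (c : Finset (Fin n)) {w : Fin n → ℝ}
    (hw : ∀ j ∉ c, w j = 0) : (fun a : c => w a) ᵥ* selMat c = w := by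
  ext j
  simp only [vecMul, dotProduct, selMat, of_apply, mul_ite, mul_one, mul_zero]
  rw [Finset.sum_coe_sort c fun k => if k = j then w k else 0, Finset.sum_ite_eq']
  split_ifs with hj
  exacts [rfl, (hw j hj).symm]

def HasPSDCliqueDecomposition (cliques : Fin p → Finset (Fin n))
    (X : Matrix (Fin n) (Fin n) ℝ) : Prop :=
  ∃ Z : (i : Fin p) → Matrix (cliques i) (cliques i) ℝ,
    (∀ i, (Z i).PosSemidef) ∧ X = ∑ i, (selMat (cliques i))ᵀ * Z i * selMat (cliques i)

namespace HasPSDCliqueDecomposition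

variable {cliques : Fin p → Finset (Fin n)} {X Y : Matrix (Fin n) (Fin n) ℝ}

theorem zero : HasPSDCliqueDecomposition cliques 0 :=
  ⟨0, fun _ => .zero, by simp⟩

theorem add (hX : HasPSDCliqueDecomposition cliques X)
    (hY : HasPSDCliqueDecomposition cliques Y) : HasPSDCliqueDecomposition cliques (X + Y) := by
  obtain ⟨Z, hZ, rfl⟩ := hX
  obtain ⟨W, hW, rfl⟩ := hY
  refine ⟨Z + W, fun i => (hZ i).add (hW i), ?_⟩
  simp only [Pi.add_apply, Matrix.mul_add, Matrix.add_mul, Finset.sum_add_distrib]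

theorem smul_vecMulVec {t : ℝ} (ht : 0 ≤ t) {w : Fin n → ℝ} (i : Fin p)
    (hw : ∀ j ∉ cliques i, w j = 0) :
    HasPSDCliqueDecomposition cliques (t • vecMulVec w w) := by
  classical
  set u : cliques i → ℝ := fun a => w a
  refine ⟨Pi.single i (t • vecMulVec u u), fun j => ?_, ?_⟩
  · rcases eq_or_ne j i with rfl | hj
    · simpa using (posSemidef_vecMulVec_self_star u).smul ht
    · simpa [Pi.single_eq_of_ne hj] using PosSemidef.zero
  · rw [Finset.sum_eq_single i (fun j _ hj => by simp [Pi.single_eq_of_ne hj]) (by simp),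
      Pi.single_eq_same, Matrix.mul_smul, Matrix.smul_mul, mul_vecMulVec, vecMulVec_mul,
      mulVec_transpose, vecMul_selMat_of_support_subset _ hw]

theorem posSemidef (h : HasPSDCliqueDecomposition cliques X) : X.PosSemidef := by
  obtain ⟨Z, hZ, rfl⟩ := h
  refine posSemidef_sum _ fun i _ => ?_
  simpa using (hZ i).conjTranspose_mul_mul_same (selMat (cliques i))

end HasPSDCliqueDecomposition

theorem hasPSDCliqueDecomposition_of_posSemidef {G : SimpleGraph (Fin n)} (hG : G.IsChordal)
    {cliques : Fin p → Finset (Fin n)}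
    (hcliques : ∀ K : Set (Fin n), G.IsClique K → ∃ i, K ⊆ cliques i)
    (S : Finset (Fin n)) {X : Matrix (Fin n) (Fin n) ℝ} (hX : X.PosSemidef)
    (hS : ∀ i ∉ S, X i = 0) (hXG : ∀ i j, i ≠ j → X i j ≠ 0 → G.Adj i j) :
    HasPSDCliqueDecomposition cliques X := by
  induction S using Finset.strongInduction generalizing X with
  | H S ih =>
    rcases S.eq_empty_or_nonempty with rfl | hSne
    · convert HasPSDCliqueDecomposition.zero
      ext i j
      simp [hS i (Finset.notMem_empty i)]
    obtain ⟨v, hv⟩ := hG.exists_isSimplicialIn hSne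
    set K := insert v ((S : Set (Fin n)) ∩ G.neighborSet v)
    have hXK : ∀ j, X v j ≠ 0 → j ∈ K := by
      intro j hj
      rcases eq_or_ne v j with rfl | hvj
      · exact Set.mem_insert _ _
      refine Set.mem_insert_of_mem _ ⟨?_, hXG v j hvj hj⟩
      by_contra hjS
      exact hj (by rw [← (isHermitian_iff_isSymm.1 hX.1).apply v j, hS j hjS]; rfl)
    have hYK : ∀ i j, X.pivotRankOne v i j ≠ 0 → i ∈ K ∧ j ∈ K := fun i j h => by
      rw [pivotRankOne_apply] at h
      exact ⟨hXK i fun h0 => h (by simp [h0]), hXK j fun h0 => h (by simp [h0])⟩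
    have hKS : K ⊆ S := Set.insert_subset hv.1 Set.inter_subset_left
    obtain ⟨i₀, hi₀⟩ := hcliques K hv.isClique_insert
    rw [← add_sub_cancel (X.pivotRankOne v) X]
    refine .add (.smul_vecMulVec (inv_nonneg.2 hX.diag_nonneg) i₀ fun j hj => ?_)
      (ih _ (Finset.erase_ssubset hv.1) (hX.sub_pivotRankOne v) (fun i hi => ?_)
        fun i j hij h => ?_)
    · by_contra h
      exact hj (hi₀ (hXK j h))
    · rcases eq_or_ne i v with rfl | hiv
      · exact hX.sub_pivotRankOne_row_self i
      have hiS : i ∉ S := fun h => hi (Finset.mem_erase.2 ⟨hiv, h⟩)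
      ext j
      have hY : X.pivotRankOne v i j = 0 := by
        by_contra h
        exact hiS (hKS (hYK i j h).1)
      simp [hS i hiS, hY]
    · by_cases hXij : X i j = 0
      · have hY : X.pivotRankOne v i j ≠ 0 := by simpa [hXij] using h
        exact hv.isClique_insert (hYK i j hY).1 (hYK i j hY).2 hij
      · exact hXG i j hij hXij

end CliqueDecomposition

theorem chordal_decomposition_general {n p : ℕ} (X : Matrix (Fin n) (Fin n) ℝ)
    (G : SimpleGraph (Fin n))
    (hG : ∀ i j, G.Adj i j ↔ i ≠ j ∧ X i j ≠ 0)
    (hchordal : G.IsChordal)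
    (cliques : Fin p → Finset (Fin n))
    (hcliques : ∀ s : Finset (Fin n),
      (G.IsClique (s : Set (Fin n)) ∧
        ∀ t : Finset (Fin n), G.IsClique (t : Set (Fin n)) → s ⊆ t → s = t)
      ↔ ∃ i, cliques i = s) :
    X.PosSemidef ↔
      ∃ Z : (i : Fin p) → Matrix (cliques i) (cliques i) ℝ,
        (∀ i, (Z i).PosSemidef) ∧
        X = ∑ i, (selMat (cliques i))ᵀ * Z i * selMat (cliques i) := by
  refine ⟨fun hX => ?_, HasPSDCliqueDecomposition.posSemidef⟩
  exact hasPSDCliqueDecomposition_of_posSemidef hchordal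
    (fun K hK => G.exists_subset_of_isClique (fun s => (hcliques s).1) hK) Finset.univ hX
    (fun i hi => absurd (Finset.mem_univ i) hi) fun i j hij h => (hG i j).2 ⟨hij, h⟩

/-- Chordal decomposition theorem: a symmetric matrix with chordal sparsity pattern is
PSD iff it is a sum `Σ_i P_iᵀ Z_i P_i` over its maximal cliques with each `Z_i` PSD. -/
theorem chordal_decomposition {n p : ℕ} (X : Matrix (Fin n) (Fin n) ℝ)
    (hX : X.IsSymm)
    (G : SimpleGraph (Fin n))
    (hG : ∀ i j, G.Adj i j ↔ i ≠ j ∧ X i j ≠ 0)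
    (hchordal : G.IsChordal)
    (cliques : Fin p → Finset (Fin n))
    (hcliques : ∀ s : Finset (Fin n),
      (G.IsClique (s : Set (Fin n)) ∧
        ∀ t : Finset (Fin n), G.IsClique (t : Set (Fin n)) → s ⊆ t → s = t)
      ↔ ∃ i, cliques i = s) :
    X.PosSemidef ↔
      ∃ Z : (i : Fin p) → Matrix (cliques i) (cliques i) ℝ,
        (∀ i, (Z i).PosSemidef) ∧
        X = ∑ i, (selMat (cliques i))ᵀ * Z i * selMat (cliques i) :=
  chordal_decomposition_general X G hG hchordal cliques hcliques
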